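/- Let π = D_{2n} = ⟨x, y | xⁿ = y², xyx = y, y² = 1⟩ be the dihedral group of order 2n. Then the sequence 0 → ℤ → ℤπ → ℤπ² → ℤπ² is exact, where the first map is multiplication by the norm element N, the second map sends v ∈ ℤπ to (v(x−1), v(1−xy)), and the third sends (v,w) to (vN_x + w(1+xy), −v(1+y) + w(x−1)), where N_x = 1 + x + ⋯ + x^{n−1}. -/

import Mathlib

open TensorProduct

section SubQuot
variable {G : Type*} [Group G] {V : Type*} [AddCommGroup V] [Module ℤ V]

/-- The restriction of a representation to an invariant submodule. -/
def subRep (ρ : Representation ℤ G V) (p : Submodule ℤ V)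
    (hp : ∀ g : G, ∀ x ∈ p, ρ g x ∈ p) : Representation ℤ G p where
  toFun g := (ρ g).restrict (hp g)
  map_one' := by
    ext x
    simp [LinearMap.restrict_apply]
  map_mul' g h := by
    ext x
    simp [LinearMap.restrict_apply, map_mul]

/-- The representation induced on the quotient by an invariant submodule. -/
noncomputable def quotRep (ρ : Representation ℤ G V) (p : Submodule ℤ V)
    (hp : ∀ g : G, ∀ x ∈ p, ρ g x ∈ p) : Representation ℤ G (V ⧸ p) where
  toFun g := Submodule.mapQ p p (ρ g) (hp g)
  map_one' := by
    apply LinearMap.ext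
    intro x
    obtain ⟨v, rfl⟩ := Submodule.Quotient.mk_surjective p x
    simp [Submodule.mapQ_apply]
  map_mul' g h := by
    apply LinearMap.ext
    intro x
    obtain ⟨v, rfl⟩ := Submodule.Quotient.mk_surjective p x
    simp [Submodule.mapQ_apply, map_mul]

end SubQuot

section GroupRing
variable (G : Type*) [Group G]

/-- The left regular representation of `G` on the group ring `ℤG`. -/
noncomputable def regRep : Representation ℤ G (MonoidAlgebra ℤ G) where
  toFun g := LinearMap.mulLeft ℤ (MonoidAlgebra.of ℤ G g)
  map_one' := by
    apply LinearMap.ext; intro x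
    simp [MonoidAlgebra.of_apply, ← MonoidAlgebra.one_def]
  map_mul' g h := by
    apply LinearMap.ext; intro x
    simp only [MonoidAlgebra.of_apply, LinearMap.mulLeft_apply, Module.End.mul_apply]
    rw [← mul_assoc, MonoidAlgebra.single_mul_single, mul_one]

/-- The augmentation map `ε : ℤG → ℤ`. -/
noncomputable def aug : MonoidAlgebra ℤ G →ₐ[ℤ] ℤ := MonoidAlgebra.lift ℤ ℤ G 1

/-- The augmentation ideal `I = ker(ε : ℤG → ℤ)`. -/
noncomputable def augI : Ideal (MonoidAlgebra ℤ G) := RingHom.ker (aug G).toRingHom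

/-- The mod 2 augmentation map `ℤG → ℤ/2`. -/
noncomputable def aug2 : MonoidAlgebra ℤ G →+* ZMod 2 :=
  (Int.castRingHom (ZMod 2)).comp (aug G).toRingHom

/-- The ideal `(I, 2) = ker(ℤG → ℤ/2)` generated by the augmentation ideal and `2`. -/
noncomputable def I2 : Ideal (MonoidAlgebra ℤ G) := RingHom.ker (aug2 G)

/-- The norm element `N = ∑_{g ∈ G} g ∈ ℤG`. -/
noncomputable def Nelt [Fintype G] : MonoidAlgebra ℤ G := ∑ g : G, MonoidAlgebra.of ℤ G g

/-- The (left) ideal of `ℤG` generated by the norm element `N`; the quotient by it is `ℤG/N`. -/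
noncomputable def NIdeal [Fintype G] : Ideal (MonoidAlgebra ℤ G) := Ideal.span {Nelt G}

/-- The left ideal `(N, 2)` of `ℤG` generated by the norm element `N` and `2`. -/
noncomputable def N2 [Fintype G] : Ideal (MonoidAlgebra ℤ G) := Ideal.span {Nelt G, 2}

lemma aug_single (g : G) : aug G (MonoidAlgebra.single g 1) = 1 := by
  simp [aug, MonoidAlgebra.lift_single]

lemma of_sub_one_mem_augI (g : G) :
    MonoidAlgebra.of ℤ G g - 1 ∈ (augI G).restrictScalars ℤ := by
  simp [augI, RingHom.mem_ker, map_sub, aug_single]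

lemma of_sub_one_mem_I2 (g : G) :
    MonoidAlgebra.of ℤ G g - 1 ∈ (I2 G).restrictScalars ℤ := by
  simp [I2, aug2, RingHom.mem_ker, map_sub, aug_single]

lemma two_mem_I2 : (2 : MonoidAlgebra ℤ G) ∈ (I2 G).restrictScalars ℤ := by
  have : (aug2 G) 2 = 2 := by simp [map_ofNat]
  simp [I2, RingHom.mem_ker, this]
  decide

lemma N_mem_I2 [Fintype G] (h : Even (Fintype.card G)) :
    Nelt G ∈ (I2 G).restrictScalars ℤ := by
  have : (aug2 G) (Nelt G) = (Fintype.card G : ZMod 2) := by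
    simp [Nelt, map_sum, aug2, aug_single]
  simp only [Submodule.restrictScalars_mem, I2, RingHom.mem_ker, this]
  rw [CharP.cast_eq_zero_iff (ZMod 2) 2]
  exact h.two_dvd

lemma N_mem_N2 [Fintype G] : Nelt G ∈ (N2 G).restrictScalars ℤ :=
  Ideal.subset_span (by simp)

lemma two_mem_N2 [Fintype G] : (2 : MonoidAlgebra ℤ G) ∈ (N2 G).restrictScalars ℤ :=
  Ideal.subset_span (by simp)

lemma ideal_invariant (J : Ideal (MonoidAlgebra ℤ G)) :
    ∀ g : G, ∀ x ∈ J.restrictScalars ℤ, (regRep G) g x ∈ J.restrictScalars ℤ := by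
  intro g x hx
  exact J.mul_mem_left _ hx

/-- A (left) ideal of `ℤG`, regarded as a representation of `G`. -/
noncomputable def idealRep (J : Ideal (MonoidAlgebra ℤ G)) :
    Representation ℤ G ↥(J.restrictScalars ℤ) :=
  subRep (regRep G) (J.restrictScalars ℤ) (ideal_invariant G J)

/-- The quotient `ℤG/N` of `ℤG` by the ideal generated by the norm element, as a
representation of `G`. -/
noncomputable def quotNRep [Fintype G] :
    Representation ℤ G (MonoidAlgebra ℤ G ⧸ (NIdeal G).restrictScalars ℤ) :=
  quotRep (regRep G) ((NIdeal G).restrictScalars ℤ) (ideal_invariant G (NIdeal G))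

/-- `2` as an element of `(I,2)`. -/
noncomputable def twoI2 : ↥((I2 G).restrictScalars ℤ) := ⟨2, two_mem_I2 G⟩

/-- `g - 1` as an element of `(I,2)`. -/
noncomputable def gm1 (g : G) : ↥((I2 G).restrictScalars ℤ) :=
  ⟨MonoidAlgebra.of ℤ G g - 1, of_sub_one_mem_I2 G g⟩

/-- `g - 1` as an element of the augmentation ideal `I`. -/
noncomputable def gm1I (g : G) : ↥((augI G).restrictScalars ℤ) :=
  ⟨MonoidAlgebra.of ℤ G g - 1, of_sub_one_mem_augI G g⟩

/-- The norm element as an element of `(I,2)` (for `G` of even order). -/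
noncomputable def NeltI2 [Fintype G] (h : Even (Fintype.card G)) :
    ↥((I2 G).restrictScalars ℤ) := ⟨Nelt G, N_mem_I2 G h⟩

/-- The norm element as an element of `(N,2)`. -/
noncomputable def NeltN2 [Fintype G] : ↥((N2 G).restrictScalars ℤ) := ⟨Nelt G, N_mem_N2 G⟩

end GroupRing

section Dihedral

/-- The element `x = r 1` (rotation) of the dihedral group, in the group ring `ℤ[D_{2n}]`. -/
noncomputable def XD (n : ℕ) : MonoidAlgebra ℤ (DihedralGroup n) :=
  MonoidAlgebra.of ℤ (DihedralGroup n) (DihedralGroup.r 1)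

/-- The element `y = sr 0` (reflection) of the dihedral group, in the group ring `ℤ[D_{2n}]`. -/
noncomputable def YD (n : ℕ) : MonoidAlgebra ℤ (DihedralGroup n) :=
  MonoidAlgebra.of ℤ (DihedralGroup n) (DihedralGroup.sr 0)

/-- The element `N_x = 1 + x + ⋯ + x^{n-1}` of `ℤ[D_{2n}]`. -/
noncomputable def NxD (n : ℕ) : MonoidAlgebra ℤ (DihedralGroup n) :=
  ∑ i ∈ Finset.range n, XD n ^ i

end Dihedral

/-!
Right multiplication by `x - 1` on `ℤπ` acts coset by coset on `π / ⟨x⟩ = {⟨x⟩, y⟨x⟩}` as on the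
group ring of the cyclic group `⟨x⟩`: its kernel consists of the elements constant on each of the
two cosets (`cosetConst`), and its image is the kernel of `N_x`. Right multiplication by the
involution `xy` swaps the two cosets, which pins down the coset-constant elements that occur.
Given `(a, b)` in the kernel of the last map, `a N_x` is invariant under `x` and `xy`, hence a
multiple of `N`, and applying the augmentation to the second equation shows it is zero. So
`a = w (x - 1)`; then `b - w (1 - xy)` is killed by `x - 1` and `1 + xy`, which makes it
`c (1 - xy)` for a coset-constant `c`, and `w + c` is the required preimage.
-/

namespace ZMod

variable {n : ℕ}

theorem apply_eq_apply_zero_of_apply_sub_one {α : Type*} {f : ZMod n → α}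
    (hf : ∀ i, f (i - 1) = f i) (i : ZMod n) : f i = f 0 := by
  obtain ⟨k, rfl⟩ := ZMod.intCast_surjective i
  induction k using Int.induction_on with
  | zero => simp
  | succ k ih => rw [← ih, ← hf]; push_cast; ring_nf
  | pred k ih => rw [← ih]; push_cast; exact hf _

-- In `ℤ[ℤ/n]` the kernel of the augmentation is the image of `g - 1` for a generator `g`.
open Finsupp Representation in
theorem exists_apply_sub_one_sub_apply_eq_of_sum_eq_zero [NeZero n] {f : ZMod n → ℤ}
    (hf : ∑ i, f i = 0) : ∃ W : ZMod n → ℤ, ∀ i, W (i - 1) - W i = f i := by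
  let c : MonoidAlgebra ℤ (Multiplicative (ZMod n)) :=
    .ofCoeff (equivFunOnFinite.symm (f ∘ Multiplicative.toAdd))
  have hc : c ∈ Coinvariants.ker (leftRegular ℤ (Multiplicative (ZMod n))) := by
    rw [FiniteCyclicGroup.coinvariantsKer_leftRegular_eq_ker]
    simpa [c, linearCombination, Finsupp.sum_fintype] using
      (Fintype.sum_equiv Multiplicative.toAdd (f ∘ Multiplicative.toAdd) f fun _ => rfl).trans hf
  rw [FiniteCyclicGroup.coinvariantsKer_eq_range _ (Multiplicative.ofAdd 1)] at hc
  · obtain ⟨d, hd⟩ := hc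
    refine ⟨fun i => d.coeff (Multiplicative.ofAdd i), fun i => ?_⟩
    simpa [c, sub_eq_neg_add, coeff_ofMulAction] using
      congrArg (fun x => x.coeff (Multiplicative.ofAdd i)) hd
  · intro x
    refine ⟨(Multiplicative.toAdd x).cast, ?_⟩
    simp only [← ofAdd_zsmul, zsmul_one, ZMod.intCast_zmod_cast]
    rfl

end ZMod

section NormElement

variable {G : Type*} [Group G] [Fintype G]

theorem coeff_Nelt (g : G) : (Nelt G).coeff g = 1 := by
  classical
  simp [Nelt, MonoidAlgebra.coeff_sum, MonoidAlgebra.of_apply, Finsupp.single_apply]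

theorem Nelt_mul_of (g : G) : Nelt G * MonoidAlgebra.of ℤ G g = Nelt G := by
  ext h
  rw [MonoidAlgebra.of_apply, MonoidAlgebra.coeff_mul_single_apply, coeff_Nelt, coeff_Nelt,
    mul_one]

theorem aug_Nelt : aug G (Nelt G) = Fintype.card G := by
  simp [Nelt, MonoidAlgebra.of_apply, aug_single]

end NormElement

namespace DihedralGroup

variable {n : ℕ}

theorem XD_pow_self : XD n ^ n = 1 := by
  rw [XD, ← map_pow, r_one_pow, ZMod.natCast_self, ← one_def, map_one]

theorem XD_mul_YD : XD n * YD n = MonoidAlgebra.of ℤ (DihedralGroup n) (sr (-1)) := by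
  rw [XD, YD, ← map_mul, r_mul_sr, zero_sub]

theorem NxD_mul_XD_sub_one : NxD n * (XD n - 1) = 0 := by
  rw [NxD, geom_sum_mul, XD_pow_self, sub_self]

theorem XD_sub_one_mul_NxD : (XD n - 1) * NxD n = 0 := by
  rw [NxD, mul_geom_sum, XD_pow_self, sub_self]

theorem XD_mul_YD_mul_self : XD n * YD n * (XD n * YD n) = 1 := by
  rw [XD_mul_YD, ← map_mul, sr_mul_sr, sub_self, ← one_def, map_one]

theorem one_sub_XD_mul_YD_mul_one_add : (1 - XD n * YD n) * (1 + XD n * YD n) = 0 := by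
  simp only [sub_mul, mul_add, one_mul, mul_one, XD_mul_YD_mul_self]
  abel

theorem one_add_XD_mul_YD_mul_one_sub : (1 + XD n * YD n) * (1 - XD n * YD n) = 0 := by
  simp only [add_mul, mul_sub, one_mul, mul_one, XD_mul_YD_mul_self]
  abel

theorem one_sub_XD_mul_YD_mul_XD_sub_one :
    (1 - XD n * YD n) * (XD n - 1) = (XD n - 1) * (1 + YD n) := by
  have hxyx : XD n * YD n * XD n = YD n := by
    rw [XD_mul_YD, XD, ← map_mul, sr_mul_r, neg_add_cancel, YD]
  simp only [sub_mul, mul_sub, one_mul, mul_one, hxyx]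
  noncomm_ring

theorem aug_XD : aug (DihedralGroup n) (XD n) = 1 := aug_single _ _

theorem aug_YD : aug (DihedralGroup n) (YD n) = 1 := aug_single _ _

theorem coeff_mul_XD (c : MonoidAlgebra ℤ (DihedralGroup n)) (g : DihedralGroup n) :
    (c * XD n).coeff g = c.coeff (g * r (-1)) := by
  rw [XD, MonoidAlgebra.of_apply, MonoidAlgebra.coeff_mul_single_apply, mul_one]
  rfl

theorem coeff_mul_XD_mul_YD (c : MonoidAlgebra ℤ (DihedralGroup n)) (g : DihedralGroup n) :
    (c * (XD n * YD n)).coeff g = c.coeff (g * sr (-1)) := by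
  rw [XD_mul_YD, MonoidAlgebra.of_apply, MonoidAlgebra.coeff_mul_single_apply, mul_one]
  rfl

variable [NeZero n]

theorem NxD_eq_sum : NxD n = ∑ i : ZMod n, MonoidAlgebra.of ℤ (DihedralGroup n) (r i) := by
  rw [NxD]
  refine Finset.sum_nbij' (fun k => (k : ZMod n)) ZMod.val (by simp) (by simp [ZMod.val_lt])
    (fun k hk => ZMod.val_cast_of_lt (Finset.mem_range.mp hk)) (by simp) fun k _ => ?_
  rw [XD, ← map_pow, r_one_pow]

theorem coeff_mul_NxD (c : MonoidAlgebra ℤ (DihedralGroup n)) (g : DihedralGroup n) :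
    (c * NxD n).coeff g = ∑ i : ZMod n, c.coeff (g * r i) := by
  simp only [NxD_eq_sum, Finset.mul_sum, MonoidAlgebra.coeff_sum, Finsupp.finsetSum_apply,
    MonoidAlgebra.of_apply, MonoidAlgebra.coeff_mul_single_apply, mul_one]
  exact Fintype.sum_equiv (Equiv.neg (ZMod n)) _ _ fun i => rfl

noncomputable def ofRotRefl (f g : ZMod n → ℤ) : MonoidAlgebra ℤ (DihedralGroup n) :=
  .ofCoeff <| Finsupp.equivFunOnFinite.symm fun
    | r i => f i
    | sr i => g i

@[simp]
theorem coeff_ofRotRefl_r (f g : ZMod n → ℤ) (i : ZMod n) : (ofRotRefl f g).coeff (r i) = f i :=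
  rfl

@[simp]
theorem coeff_ofRotRefl_sr (f g : ZMod n → ℤ) (i : ZMod n) : (ofRotRefl f g).coeff (sr i) = g i :=
  rfl

noncomputable def cosetConst (α β : ℤ) : MonoidAlgebra ℤ (DihedralGroup n) :=
  ofRotRefl (fun _ => α) (fun _ => β)

@[simp]
theorem coeff_cosetConst_r (α β : ℤ) (i : ZMod n) : (cosetConst α β).coeff (r i) = α :=
  rfl

@[simp]
theorem coeff_cosetConst_sr (α β : ℤ) (i : ZMod n) : (cosetConst α β).coeff (sr i) = β :=
  rfl

theorem cosetConst_inj {α β α' β' : ℤ} :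
    cosetConst (n := n) α β = cosetConst α' β' ↔ α = α' ∧ β = β' := by
  refine ⟨fun h => ⟨?_, ?_⟩, fun ⟨hα, hβ⟩ => hα ▸ hβ ▸ rfl⟩
  · exact congrArg (·.coeff (r 0)) h
  · exact congrArg (·.coeff (sr 0)) h

theorem cosetConst_zero : cosetConst (n := n) 0 0 = 0 := by
  ext g; cases g <;> rfl

theorem smul_Nelt (k : ℤ) : k • Nelt (DihedralGroup n) = cosetConst k k := by
  ext g
  rw [MonoidAlgebra.coeff_smul, Finsupp.smul_apply, coeff_Nelt, smul_eq_mul, mul_one]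
  cases g <;> rfl

theorem cosetConst_mul_XD_sub_one (α β : ℤ) : cosetConst (n := n) α β * (XD n - 1) = 0 := by
  ext g; cases g <;> simp [mul_sub, coeff_mul_XD]

theorem cosetConst_mul_one_sub_XD_mul_YD (α β : ℤ) :
    cosetConst α β * (1 - XD n * YD n) = cosetConst (α - β) (β - α) := by
  ext g; cases g <;> simp [mul_sub, coeff_mul_XD_mul_YD]

theorem cosetConst_mul_one_add_XD_mul_YD (α β : ℤ) :
    cosetConst α β * (1 + XD n * YD n) = cosetConst (α + β) (β + α) := by
  ext g; cases g <;> simp [mul_add, coeff_mul_XD_mul_YD]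

theorem exists_eq_cosetConst_of_mul_XD_sub_one_eq_zero {v : MonoidAlgebra ℤ (DihedralGroup n)}
    (h : v * (XD n - 1) = 0) : ∃ α β, v = cosetConst α β := by
  rw [mul_sub, mul_one, sub_eq_zero] at h
  have hx (g : DihedralGroup n) : v.coeff (g * r (-1)) = v.coeff g := by
    rw [← coeff_mul_XD, h]
  have hr := ZMod.apply_eq_apply_zero_of_apply_sub_one (f := fun i => v.coeff (r i))
    fun i => by simpa [sub_eq_add_neg] using hx (r i)
  have hs := ZMod.apply_eq_apply_zero_of_apply_sub_one (f := fun i => v.coeff (sr i))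
    fun i => by simpa [sub_eq_add_neg] using hx (sr i)
  refine ⟨v.coeff (r 0), v.coeff (sr 0), ?_⟩
  ext g
  cases g with
  | r i => exact hr i
  | sr i => exact hs i

theorem exists_smul_Nelt_eq_of_mul_eq_zero {v : MonoidAlgebra ℤ (DihedralGroup n)}
    (h1 : v * (XD n - 1) = 0) (h2 : v * (1 - XD n * YD n) = 0) :
    ∃ k : ℤ, k • Nelt (DihedralGroup n) = v := by
  obtain ⟨α, β, rfl⟩ := exists_eq_cosetConst_of_mul_XD_sub_one_eq_zero h1
  rw [cosetConst_mul_one_sub_XD_mul_YD, ← cosetConst_zero, cosetConst_inj, sub_eq_zero] at h2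
  exact ⟨α, by rw [smul_Nelt, h2.1]⟩

theorem exists_cosetConst_mul_eq_of_mul_eq_zero {d : MonoidAlgebra ℤ (DihedralGroup n)}
    (h1 : d * (XD n - 1) = 0) (h2 : d * (1 + XD n * YD n) = 0) :
    ∃ γ, cosetConst γ 0 * (1 - XD n * YD n) = d := by
  obtain ⟨α, β, rfl⟩ := exists_eq_cosetConst_of_mul_XD_sub_one_eq_zero h1
  rw [cosetConst_mul_one_add_XD_mul_YD, ← cosetConst_zero, cosetConst_inj] at h2
  exact ⟨α, by rw [cosetConst_mul_one_sub_XD_mul_YD, cosetConst_inj]; omega⟩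

theorem exists_mul_XD_sub_one_eq_of_mul_NxD_eq_zero {v : MonoidAlgebra ℤ (DihedralGroup n)}
    (h : v * NxD n = 0) : ∃ w, w * (XD n - 1) = v := by
  have hr : ∑ i, v.coeff (r i) = 0 := by simpa [coeff_mul_NxD] using congrArg (·.coeff (r 0)) h
  have hs : ∑ i, v.coeff (sr i) = 0 := by simpa [coeff_mul_NxD] using congrArg (·.coeff (sr 0)) h
  obtain ⟨Wr, hWr⟩ := ZMod.exists_apply_sub_one_sub_apply_eq_of_sum_eq_zero hr
  obtain ⟨Ws, hWs⟩ := ZMod.exists_apply_sub_one_sub_apply_eq_of_sum_eq_zero hs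
  refine ⟨ofRotRefl Wr Ws, ?_⟩
  ext g; cases g <;> simp [mul_sub, coeff_mul_XD, ← sub_eq_add_neg, hWr, hWs]

theorem Nelt_mul_XD_sub_one : Nelt (DihedralGroup n) * (XD n - 1) = 0 := by
  rw [mul_sub, mul_one, XD, Nelt_mul_of, sub_self]

theorem Nelt_mul_one_sub_XD_mul_YD : Nelt (DihedralGroup n) * (1 - XD n * YD n) = 0 := by
  rw [mul_sub, mul_one, XD_mul_YD, Nelt_mul_of, sub_self]

theorem exists_mul_eq_of_mul_NxD_add_eq_zero {a b : MonoidAlgebra ℤ (DihedralGroup n)}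
    (h1 : a * NxD n + b * (1 + XD n * YD n) = 0)
    (h2 : -(a * (1 + YD n)) + b * (XD n - 1) = 0) :
    ∃ v, v * (XD n - 1) = a ∧ v * (1 - XD n * YD n) = b := by
  have haug : aug _ a = 0 := by
    have := congrArg (aug _) h2
    simp only [map_add, map_neg, map_mul, map_sub, map_one, aug_XD, aug_YD, map_zero] at this
    linarith
  have haN : a * NxD n = 0 := by
    obtain ⟨k, hk⟩ := exists_smul_Nelt_eq_of_mul_eq_zero (v := a * NxD n)
      (by rw [mul_assoc, NxD_mul_XD_sub_one, mul_zero])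
      (by rw [eq_neg_of_add_eq_zero_left h1, neg_mul, mul_assoc, one_add_XD_mul_YD_mul_one_sub,
        mul_zero, neg_zero])
    have hk0 : k * (2 * n) = 0 := by
      simpa [haug, aug_Nelt, DihedralGroup.card] using congrArg (aug _) hk
    rw [← hk, (by simpa [NeZero.ne n] using hk0 : k = 0), zero_smul]
  have hb : b * (1 + XD n * YD n) = 0 := by rwa [haN, zero_add] at h1
  obtain ⟨w, rfl⟩ := exists_mul_XD_sub_one_eq_of_mul_NxD_eq_zero haN
  obtain ⟨γ, hγ⟩ := exists_cosetConst_mul_eq_of_mul_eq_zero (d := b - w * (1 - XD n * YD n))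
    (by
      rw [sub_mul, mul_assoc, one_sub_XD_mul_YD_mul_XD_sub_one, ← mul_assoc, sub_eq_zero]
      exact (neg_add_eq_zero.mp h2).symm)
    (by rw [sub_mul, hb, mul_assoc, one_sub_XD_mul_YD_mul_one_add, mul_zero, sub_zero])
  exact ⟨w + cosetConst γ 0, by rw [add_mul, cosetConst_mul_XD_sub_one, add_zero],
    by rw [add_mul, hγ, add_sub_cancel]⟩

theorem smul_Nelt_injective : Function.Injective fun k : ℤ => k • Nelt (DihedralGroup n) :=
  fun k k' h => (cosetConst_inj.mp (by simpa only [smul_Nelt] using h)).1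

theorem exact_smul_Nelt :
    Function.Exact (fun k : ℤ => k • Nelt (DihedralGroup n))
      (fun v : MonoidAlgebra ℤ (DihedralGroup n) =>
        (v * (XD n - 1), v * (1 - XD n * YD n))) := by
  intro v
  simp only [Prod.mk_eq_zero, Set.mem_range]
  refine ⟨fun ⟨h1, h2⟩ => exists_smul_Nelt_eq_of_mul_eq_zero h1 h2, ?_⟩
  rintro ⟨k, rfl⟩
  rw [smul_mul_assoc, smul_mul_assoc, Nelt_mul_XD_sub_one, Nelt_mul_one_sub_XD_mul_YD, smul_zero]
  exact ⟨rfl, rfl⟩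

theorem exact_prod_mul_XD_sub_one :
    Function.Exact
      (fun v : MonoidAlgebra ℤ (DihedralGroup n) =>
        (v * (XD n - 1), v * (1 - XD n * YD n)))
      (fun vw : MonoidAlgebra ℤ (DihedralGroup n) × MonoidAlgebra ℤ (DihedralGroup n) =>
        (vw.1 * NxD n + vw.2 * (1 + XD n * YD n),
         -(vw.1 * (1 + YD n)) + vw.2 * (XD n - 1))) := by
  rintro ⟨a, b⟩
  simp only [Set.mem_range, Prod.ext_iff]
  refine ⟨fun ⟨h1, h2⟩ => exists_mul_eq_of_mul_NxD_add_eq_zero h1 h2, ?_⟩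
  rintro ⟨v, rfl, rfl⟩
  rw [mul_assoc, mul_assoc, XD_sub_one_mul_NxD, one_sub_XD_mul_YD_mul_one_add, mul_assoc,
    mul_assoc, one_sub_XD_mul_YD_mul_XD_sub_one]
  simp

end DihedralGroup

/-- For `π = D_{2n} = ⟨x, y | xⁿ = y², xyx = y, y² = 1⟩` the dihedral group of
order `2n`, the sequence `0 → ℤ → ℤπ → ℤπ² → ℤπ²` is exact, where the first map is
multiplication by the norm element `N`, the second sends `v` to `(v(x-1), v(1-xy))` and the
third sends `(v, w)` to `(vN_x + w(1+xy), -v(1+y) + w(x-1))`. -/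
theorem stmt14 (n : ℕ) [NeZero n] :
    (Function.Injective fun k : ℤ => k • Nelt (DihedralGroup n)) ∧
    Function.Exact (fun k : ℤ => k • Nelt (DihedralGroup n))
      (fun v : MonoidAlgebra ℤ (DihedralGroup n) =>
        (v * (XD n - 1), v * (1 - XD n * YD n))) ∧
    Function.Exact
      (fun v : MonoidAlgebra ℤ (DihedralGroup n) =>
        (v * (XD n - 1), v * (1 - XD n * YD n)))
      (fun vw : MonoidAlgebra ℤ (DihedralGroup n) × MonoidAlgebra ℤ (DihedralGroup n) =>
        (vw.1 * NxD n + vw.2 * (1 + XD n * YD n),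
         -(vw.1 * (1 + YD n)) + vw.2 * (XD n - 1))) :=
  ⟨DihedralGroup.smul_Nelt_injective, DihedralGroup.exact_smul_Nelt,
    DihedralGroup.exact_prod_mul_XD_sub_one⟩
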